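/- arXiv:1405.7157 — 2 statements merged into one kernel-verified Lean document; each statement's English description precedes it below -/
import Mathlib

section
/- Let Λ ⊂ ℂ^{2m} be a complex Lagrangian subspace (for the canonical complex symplectic form ω) that is invariant under the fundamental matrix F₀ = J·M of a positive definite real quadratic form with matrix M. Then Λ ∩ ℝ^{2m} = {0}. -/
open Complex

/-- The canonical complex symplectic form on `ℂ^{2m} = ℂ^m_x × ℂ^m_ξ`. -/
noncomputable def symplC (m : ℕ) (X Y : (Fin m → ℂ) × (Fin m → ℂ)) : ℂ :=
  (∑ j, X.2 j * Y.1 j) - ∑ j, X.1 j * Y.2 j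

/-- A vector of `ℂ^{2m}` is real when all its components are real. -/
def isRealV (m : ℕ) (X : (Fin m → ℂ) × (Fin m → ℂ)) : Prop :=
  ∀ j, (X.1 j).im = 0 ∧ (X.2 j).im = 0

/-- Let `Λ ⊂ ℂ^{2m}` be a complex Lagrangian subspace invariant under the fundamental
matrix `F₀ = J·M` of a positive definite real quadratic form (with associated bilinear
form `b`, linked to `F₀` via `2 b(X,Y) = ω(X, F₀ Y)`). Then `Λ ∩ ℝ^{2m} = {0}`. -/
theorem stmt2 (m : ℕ)
    (Λ : Submodule ℂ ((Fin m → ℂ) × (Fin m → ℂ)))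
    (F₀ : ((Fin m → ℂ) × (Fin m → ℂ)) →ₗ[ℂ] ((Fin m → ℂ) × (Fin m → ℂ)))
    (b : ((Fin m → ℂ) × (Fin m → ℂ)) → ((Fin m → ℂ) × (Fin m → ℂ)) → ℂ)
    (hdim : Module.finrank ℂ Λ = m)
    (hLag : ∀ X ∈ Λ, ∀ Y ∈ Λ, symplC m X Y = 0)
    (hinv : ∀ X ∈ Λ, F₀ X ∈ Λ)
    (hbF : ∀ X Y, 2 * b X Y = symplC m X (F₀ Y))
    (hposdef : ∀ X, isRealV m X → X ≠ 0 → 0 < (b X X).re ∧ (b X X).im = 0) :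
    ∀ X ∈ Λ, isRealV m X → X = 0 := by
  intro X hX hreal
  by_contra hne
  have h0 : symplC m X (F₀ X) = 0 := hLag X hX (F₀ X) (hinv X hX)
  have hb : b X X = 0 := by
    have := hbF X X
    rw [h0] at this
    linear_combination this / 2
  have := (hposdef X hreal hne).1
  rw [hb] at this
  simp at this
end

section
/- (Localization formula for P² with respect to an operator 𝔄) Let H be a Hilbert space, D ⊆ H a subspace, P symmetric on D with P(D) ⊆ D, and 𝔄 with 𝔄(D) ⊆ D and 𝔄*(D) ⊆ D. Then for all ψ ∈ D: Re⟨P²ψ, 𝔄𝔄*ψ⟩ = ‖P(𝔄*ψ)‖² − ‖[𝔄*, P]ψ‖² + Re⟨Pψ, [[P,𝔄],𝔄*]ψ⟩ + Re(⟨Pψ, 𝔄*[P,𝔄]ψ⟩ − conj(⟨Pψ, 𝔄[P,𝔄*]ψ⟩)). -/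
/-!
Expanding the commutators, the right-hand side is a combination of `‖P𝔄*ψ‖²`, `‖[𝔄*,P]ψ‖²` and
real parts of inner products of `P𝔄𝔄*ψ`, `𝔄P𝔄*ψ`, `𝔄𝔄*Pψ` against `Pψ`. Moving `𝔄` across
by the adjoint relation expresses `‖[𝔄*,P]ψ‖²` through the last two of these, and moving `P`
across by symmetry turns the first into the left-hand side; everything else cancels.
-/

open Complex

section FormalAdjoint

variable {H : Type*} [NormedAddCommGroup H] [InnerProductSpace ℂ H]

lemma norm_formalAdjoint_sub_sq (D : Submodule ℂ H) (A As : H →ₗ[ℂ] H)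
    (hadj : ∀ x ∈ D, ∀ y ∈ D, (inner ℂ (A x) y : ℂ) = inner ℂ x (As y))
    {u v : H} (hu : u ∈ D) (hAsu : As u ∈ D) (hv : v ∈ D) :
    ‖As u - v‖ ^ 2
      = (inner ℂ (A (As u)) u : ℂ).re - 2 * (inner ℂ (A v) u : ℂ).re + ‖v‖ ^ 2 := by
  rw [@norm_sub_sq ℂ, hadj _ hAsu _ hu, hadj _ hv _ hu, inner_self_eq_norm_sq_to_K, inner_re_symm]
  simp [← ofReal_pow]

end FormalAdjoint

/-- The paper's `⟨f,g⟩` is linear in `f`, so it is `inner ℂ g f` here. -/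
theorem stmt15 {H : Type*} [NormedAddCommGroup H] [InnerProductSpace ℂ H]
    (D : Submodule ℂ H) (P A As : H →ₗ[ℂ] H)
    (hPD : ∀ x ∈ D, P x ∈ D) (hAD : ∀ x ∈ D, A x ∈ D) (hAsD : ∀ x ∈ D, As x ∈ D)
    (hPsym : ∀ x ∈ D, ∀ y ∈ D, (inner ℂ (P x) y : ℂ) = inner ℂ x (P y))
    (hadj : ∀ x ∈ D, ∀ y ∈ D, (inner ℂ (A x) y : ℂ) = inner ℂ x (As y))
    (ψ : H) (hψ : ψ ∈ D) :
    (inner ℂ (A (As ψ)) (P (P ψ)) : ℂ).re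
      = ‖P (As ψ)‖ ^ 2 - ‖As (P ψ) - P (As ψ)‖ ^ 2
        + (inner ℂ ((P (A (As ψ)) - A (P (As ψ))) - (As (P (A ψ)) - As (A (P ψ))))
            (P ψ) : ℂ).re
        + ((inner ℂ (As (P (A ψ)) - As (A (P ψ))) (P ψ) : ℂ)
            - (starRingEnd ℂ) (inner ℂ (A (P (As ψ)) - A (As (P ψ))) (P ψ) : ℂ)).re := by
  have hPψ := hPD ψ hψ
  have hAsψ := hAsD ψ hψ
  have hsym : (inner ℂ (A (As ψ)) (P (P ψ)) : ℂ) = inner ℂ (P (A (As ψ))) (P ψ) :=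
    (hPsym _ (hAD _ hAsψ) _ hPψ).symm
  have hcomm := norm_formalAdjoint_sub_sq D A As hadj hPψ (hAsD _ hPψ) (hPD _ hAsψ)
  rw [hsym, hcomm]
  simp only [inner_sub_left, map_sub, sub_re, conj_re]
  ring
end
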